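/- arXiv:1604.06286 — 2 statements merged into one kernel-verified Lean document; each statement's English description precedes it below -/
import Mathlib

section
/- Let n = 2k+1 with k ≥ 2 (so n ≥ 5 odd), let A be the Cartan matrix of type A_n, and let σ be any permutation of {1,…,n}. If α and β are positive roots of type A_n (written in simple-root coordinates, viewed as integer vectors in ℤⁿ) satisfying B_σ·α = B_σ·β, then α = β. -/
/-!
Put `γ = α - β`. Row `i` of `B_σ` has exactly two nonzero entries, both `±1`, at the neighbours
`i - 1` and `i + 1` of `i` (only one in the first row), so `B_σ γ = 0` forces `γ 1 = 0` and
`|γ (m + 2)| = |γ m|`: the odd coordinates of `γ` vanish and the even ones all have the absolute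
value of `γ 0`. On the other hand `γ` is supported on the symmetric difference of two intervals,
which cannot contain `0, 2, 4` while missing `1, 3`. Hence `γ 0 = 0`, and then `γ = 0`.
-/

open Matrix

/-- The Cartan matrix of type `Aₙ` (nodes indexed `0, …, n-1`). -/
def cartanA (n : ℕ) : Matrix (Fin n) (Fin n) ℤ :=
  fun i j => if i = j then 2
    else if i.val + 1 = j.val ∨ j.val + 1 = i.val then -1 else 0

/-- The acyclic exchange matrix `B_σ` attached to a Cartan matrix `A` and a permutation `σ`:
`b i i = 0`, `b i j = -a i j` if `σ i < σ j`, and `b i j = a i j` if `σ i > σ j`. -/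
def Bmat {n : ℕ} (A : Matrix (Fin n) (Fin n) ℤ) (σ : Equiv.Perm (Fin n)) :
    Matrix (Fin n) (Fin n) ℤ :=
  fun i j => if i = j then 0 else if σ i < σ j then -A i j else A i j

/-- The positive roots of type `Aₙ` in simple-root coordinates (nodes `0`-indexed):
vectors equal to `1` on an interval `[a, b]` of indices and `0` elsewhere. -/
def IsPosRootA (n : ℕ) (v : Fin n → ℤ) : Prop :=
  ∃ a b : ℕ, a ≤ b ∧ b < n ∧
    v = fun i => if a ≤ i.val ∧ i.val ≤ b then 1 else 0

open Set
open scoped symmDiff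

theorem Set.Icc_symmDiff_Icc_mem_or_mem {α : Type*} [LinearOrder α] {a b c d x y z u v : α}
    (hxy : x < y) (hyz : y < z) (hzu : z < u) (huv : u < v)
    (hx : x ∈ Icc a b ∆ Icc c d) (hz : z ∈ Icc a b ∆ Icc c d) (hv : v ∈ Icc a b ∆ Icc c d) :
    y ∈ Icc a b ∆ Icc c d ∨ u ∈ Icc a b ∆ Icc c d := by
  simp only [mem_symmDiff, mem_Icc] at *
  grind

theorem ite_sub_ite_eq_zero_iff_notMem_Icc_symmDiff_Icc (a b c d m : ℕ) :
    ((if a ≤ m ∧ m ≤ b then (1 : ℤ) else 0) - if c ≤ m ∧ m ≤ d then 1 else 0) = 0 ↔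
      m ∉ Icc a b ∆ Icc c d := by
  simp only [mem_symmDiff, mem_Icc]
  split_ifs <;> simp_all

theorem IsPosRootA.eq_of_abs_sub_apply {n : ℕ} {α β : Fin n → ℤ} (hα : IsPosRootA n α)
    (hβ : IsPosRootA n β) (hn : 4 < n)
    (h : ∀ m (hm : m < n), |(α - β) ⟨m, hm⟩| = if Even m then |(α - β) ⟨0, by omega⟩| else 0) :
    α = β := by
  obtain ⟨a, b, -, -, hα⟩ := hα
  obtain ⟨c, d, -, -, hβ⟩ := hβ
  have hmem (m : ℕ) (hm : m < n) :
      m ∈ Icc a b ∆ Icc c d ↔ Even m ∧ (α - β) ⟨0, by omega⟩ ≠ 0 := by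
    rw [← not_not (a := m ∈ _), ← ite_sub_ite_eq_zero_iff_notMem_Icc_symmDiff_Icc,
      show _ - _ = (α - β) ⟨m, hm⟩ by rw [Pi.sub_apply, hα, hβ], ← abs_eq_zero, h m hm]
    split_ifs <;> simp [*]
  have h0 : (α - β) ⟨0, by omega⟩ = 0 := by
    by_contra h0
    rcases Icc_symmDiff_Icc_mem_or_mem (y := 1) (u := 3) zero_lt_one one_lt_two
      (by norm_num : 2 < 3) (by norm_num : 3 < 4) ((hmem 0 (by omega)).2 ⟨by decide, h0⟩)
      ((hmem 2 (by omega)).2 ⟨by decide, h0⟩) ((hmem 4 hn).2 ⟨by decide, h0⟩) with h1 | h3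
    exacts [absurd ((hmem 1 (by omega)).1 h1).1 (by decide),
      absurd ((hmem 3 (by omega)).1 h3).1 (by decide)]
  funext ⟨m, hm⟩
  have hm0 := h m hm
  rwa [h0, abs_zero, ite_self, abs_eq_zero, Pi.sub_apply, sub_eq_zero] at hm0

section Bmat

variable {n : ℕ} (σ : Equiv.Perm (Fin n))

theorem Bmat_cartanA_apply_of_not_adj {i j : Fin n}
    (h : ¬(i.val + 1 = j.val ∨ j.val + 1 = i.val)) : Bmat (cartanA n) σ i j = 0 := by
  unfold Bmat cartanA
  split_ifs <;> simp_all

theorem Bmat_cartanA_apply_of_adj {i j : Fin n} (h : i.val + 1 = j.val ∨ j.val + 1 = i.val) :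
    Bmat (cartanA n) σ i j = 1 ∨ Bmat (cartanA n) σ i j = -1 := by
  have hij : i ≠ j := by rintro rfl; omega
  unfold Bmat cartanA
  split_ifs <;> simp_all

theorem mulVec_Bmat_cartanA_apply_zero (γ : Fin n → ℤ) (h1 : 1 < n) :
    (Bmat (cartanA n) σ *ᵥ γ) ⟨0, by omega⟩ =
      Bmat (cartanA n) σ ⟨0, by omega⟩ ⟨1, h1⟩ * γ ⟨1, h1⟩ := by
  refine Fintype.sum_eq_single (f := fun j ↦ Bmat (cartanA n) σ _ j * γ j) _ fun j hj ↦ ?_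
  rw [Bmat_cartanA_apply_of_not_adj σ (by simp [Fin.ext_iff] at hj ⊢; omega), zero_mul]

theorem mulVec_Bmat_cartanA_apply_succ (γ : Fin n → ℤ) {m : ℕ} (hm : m + 2 < n) :
    (Bmat (cartanA n) σ *ᵥ γ) ⟨m + 1, by omega⟩
      = Bmat (cartanA n) σ ⟨m + 1, by omega⟩ ⟨m, by omega⟩ * γ ⟨m, by omega⟩
        + Bmat (cartanA n) σ ⟨m + 1, by omega⟩ ⟨m + 2, hm⟩ * γ ⟨m + 2, hm⟩ := by
  refine Fintype.sum_eq_add (f := fun j ↦ Bmat (cartanA n) σ _ j * γ j) _ _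
    (by simp [Fin.ext_iff]) fun j hj ↦ ?_
  rw [Bmat_cartanA_apply_of_not_adj σ (by simp [Fin.ext_iff] at hj ⊢; omega), zero_mul]

variable {σ} {γ : Fin n → ℤ} (hγ : Bmat (cartanA n) σ *ᵥ γ = 0)
include hγ

theorem apply_one_eq_zero_of_mulVec_Bmat_cartanA_eq_zero (h1 : 1 < n) : γ ⟨1, h1⟩ = 0 := by
  have h : _ = (0 : ℤ) := (mulVec_Bmat_cartanA_apply_zero σ γ h1).symm.trans (congrFun hγ _)
  rcases Bmat_cartanA_apply_of_adj σ (i := ⟨0, by omega⟩) (j := ⟨1, h1⟩) (.inl rfl) with e | e <;>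
    simp_all

theorem abs_apply_add_two_of_mulVec_Bmat_cartanA_eq_zero {m : ℕ} (hm : m + 2 < n) :
    |γ ⟨m + 2, hm⟩| = |γ ⟨m, by omega⟩| := by
  have h : _ = (0 : ℤ) := (mulVec_Bmat_cartanA_apply_succ σ γ hm).symm.trans (congrFun hγ _)
  rw [abs_eq_abs]
  rcases Bmat_cartanA_apply_of_adj σ (i := ⟨m + 1, by omega⟩) (j := ⟨m, by omega⟩) (.inr rfl)
    with e | e <;>
  rcases Bmat_cartanA_apply_of_adj σ (i := ⟨m + 1, by omega⟩) (j := ⟨m + 2, hm⟩) (.inl rfl)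
    with e' | e' <;> rw [e, e'] at h <;> omega

theorem abs_apply_of_mulVec_Bmat_cartanA_eq_zero (m : ℕ) (hm : m < n) :
    |γ ⟨m, hm⟩| = if Even m then |γ ⟨0, by omega⟩| else 0 := by
  induction m using Nat.strong_induction_on with
  | _ m ih =>
    match m with
    | 0 => simp
    | 1 => simp [apply_one_eq_zero_of_mulVec_Bmat_cartanA_eq_zero hγ hm]
    | m + 2 => simp [abs_apply_add_two_of_mulVec_Bmat_cartanA_eq_zero hγ hm, ih m (by omega),
        Nat.even_add]

end Bmat

/-- In type `Aₙ` with `n = 2k+1` odd, `n ≥ 5`, the acyclic exchange matrix `B_σ` is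
injective on the set of positive roots. -/
theorem Bmat_injOn_posRoots_typeA (k : ℕ) (hk : 2 ≤ k)
    (σ : Equiv.Perm (Fin (2 * k + 1))) (α β : Fin (2 * k + 1) → ℤ)
    (hα : IsPosRootA (2 * k + 1) α) (hβ : IsPosRootA (2 * k + 1) β)
    (h : (Bmat (cartanA (2 * k + 1)) σ).mulVec α =
         (Bmat (cartanA (2 * k + 1)) σ).mulVec β) :
    α = β :=
  hα.eq_of_abs_sub_apply hβ (by omega)
    (abs_apply_of_mulVec_Bmat_cartanA_eq_zero (by rw [mulVec_sub, h, sub_self]))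
end

section
/- Let n = 2k+1 with k ≥ 2 (so n ≥ 5 odd), let A be the Cartan matrix of type B_n, and let σ be any permutation of {1,…,n}. If α and β are positive roots of type B_n (written in simple-root coordinates, viewed as integer vectors in ℤⁿ) satisfying B_σ·α = B_σ·β, then α = β. -/
open Matrix

/-- The Cartan matrix of type `Bₙ` (nodes indexed `0, …, n-1`; the short root is the last
node): `a i i = 2`, consecutive nodes give `-1`, except `a (n-2) (n-1) = -2`. -/
def cartanB (n : ℕ) : Matrix (Fin n) (Fin n) ℤ :=
  fun i j => if i = j then 2
    else if i.val + 1 = j.val then (if j.val = n - 1 then -2 else -1)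
    else if j.val + 1 = i.val then -1 else 0

/-- The positive roots of type `Bₙ` in simple-root coordinates (nodes `0`-indexed):
either `1` on an interval `[a, b]` and `0` elsewhere, or `1` on `[a, b-1]`, `2` on
`[b, n-1]` and `0` elsewhere (with `a < b`). -/
def IsPosRootB (n : ℕ) (v : Fin n → ℤ) : Prop :=
  (∃ a b : ℕ, a ≤ b ∧ b < n ∧
    v = fun i => if a ≤ i.val ∧ i.val ≤ b then 1 else 0) ∨
  (∃ a b : ℕ, a < b ∧ b < n ∧
    v = fun i => if b ≤ i.val then 2 else if a ≤ i.val then 1 else 0)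

/-!
Put `x = α - β`, so that `B_σ x = 0`. The matrix `B_σ` is tridiagonal with zero diagonal and
nonzero off-diagonal entries, so its rows `0, 2, 4, …` successively force the odd coordinates
of `x` to vanish, while its odd rows give `|x (i-1)| = |x (i+1)|` on the even coordinates,
except the row next to the short root, where the entry `±2` gives `|x (n-3)| = 2 |x (n-1)|`.
Hence `|x 0| = 2 |x (n-1)|`, whereas `|x 0| ≤ 1` because the first coordinate of a positive
root is `0` or `1`. So `x (n-1) = 0`, and then `x = 0`.
-/

def IsHollowTridiagonal {R : Type*} [Zero R] {n : ℕ} (M : Matrix (Fin n) (Fin n) R) : Prop :=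
  ∀ i j : Fin n, i.val + 1 ≠ j.val → j.val + 1 ≠ i.val → M i j = 0

namespace IsHollowTridiagonal

variable {R : Type*} [CommRing R] {n : ℕ} {M : Matrix (Fin n) (Fin n) R}

lemma mulVec_apply_of_consecutive (hM : IsHollowTridiagonal M) (x : Fin n → R)
    {i j l : Fin n} (hij : i.val + 1 = j.val) (hjl : j.val + 1 = l.val) :
    (M *ᵥ x) j = M j i * x i + M j l * x l := by
  have hil : i ≠ l := Fin.ne_of_val_ne (by omega)
  rw [mulVec, dotProduct, ← Finset.sum_pair (f := fun c => M j c * x c) hil]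
  refine (Finset.sum_subset (Finset.subset_univ _) fun c _ hc => ?_).symm
  simp only [Finset.mem_insert, Finset.mem_singleton, not_or, Fin.ext_iff] at hc
  rw [hM j c (by omega) (by omega), zero_mul]

lemma mulVec_apply_of_val_eq_zero (hM : IsHollowTridiagonal M) (x : Fin n → R)
    {j l : Fin n} (hj : j.val = 0) (hjl : j.val + 1 = l.val) :
    (M *ᵥ x) j = M j l * x l := by
  rw [mulVec, dotProduct, ← Finset.sum_singleton (fun c => M j c * x c) l]
  refine (Finset.sum_subset (Finset.subset_univ _) fun c _ hc => ?_).symm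
  rw [Finset.mem_singleton, Fin.ext_iff] at hc
  rw [hM j c (by omega) (by omega), zero_mul]

lemma apply_eq_zero_of_odd [NoZeroDivisors R] (hM : IsHollowTridiagonal M)
    (hsup : ∀ i j : Fin n, i.val + 1 = j.val → M i j ≠ 0) {x : Fin n → R} (hx : M *ᵥ x = 0)
    (i : Fin n) (hi : Odd i.val) : x i = 0 := by
  obtain ⟨m, hm⟩ := hi
  induction m generalizing i with
  | zero =>
    have hrow := hM.mulVec_apply_of_val_eq_zero x (j := ⟨0, by omega⟩) (l := i) rfl
      (by simp [hm])
    rw [hx, Pi.zero_apply, eq_comm] at hrow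
    exact (mul_eq_zero.mp hrow).resolve_left (hsup _ _ (by simp [hm]))
  | succ m ih =>
    have hrow := hM.mulVec_apply_of_consecutive x (i := ⟨2 * m + 1, by omega⟩)
      (j := ⟨2 * m + 2, by omega⟩) (l := i) rfl (by simp [hm]; omega)
    rw [hx, ih _ rfl, mul_zero, zero_add, Pi.zero_apply, eq_comm] at hrow
    exact (mul_eq_zero.mp hrow).resolve_left (hsup _ _ (by simp [hm]; omega))

end IsHollowTridiagonal

lemma abs_Bmat_apply_of_ne {n : ℕ} (A : Matrix (Fin n) (Fin n) ℤ) (σ : Equiv.Perm (Fin n))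
    {i j : Fin n} (h : i ≠ j) : |Bmat A σ i j| = |A i j| := by
  simp only [Bmat, h, if_false]
  split_ifs <;> simp

section TypeB

variable {n : ℕ} (σ : Equiv.Perm (Fin n))

lemma cartanB_apply_of_val_succ_eq {i j : Fin n} (h : j.val + 1 = i.val) :
    cartanB n i j = -1 := by
  have hij : i ≠ j := Fin.ne_of_val_ne (by omega)
  simp [cartanB, hij, h, show i.val + 1 ≠ j.val by omega]

lemma cartanB_apply_of_val_eq_succ {i j : Fin n} (h : i.val + 1 = j.val) :
    cartanB n i j = if j.val = n - 1 then -2 else -1 := by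
  have hij : i ≠ j := Fin.ne_of_val_ne (by omega)
  simp [cartanB, hij, h]

lemma Bmat_cartanB_isHollowTridiagonal : IsHollowTridiagonal (Bmat (cartanB n) σ) := by
  intro i j h₁ h₂
  by_cases hij : i = j
  · simp [Bmat, hij]
  · simp [Bmat, cartanB, hij, h₁, h₂]

lemma abs_Bmat_cartanB_of_val_succ_eq {i j : Fin n} (h : j.val + 1 = i.val) :
    |Bmat (cartanB n) σ i j| = 1 := by
  rw [abs_Bmat_apply_of_ne _ _ (Fin.ne_of_val_ne (by omega)), cartanB_apply_of_val_succ_eq h]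
  rfl

lemma abs_Bmat_cartanB_of_val_eq_succ {i j : Fin n} (h : i.val + 1 = j.val) :
    |Bmat (cartanB n) σ i j| = if j.val = n - 1 then 2 else 1 := by
  rw [abs_Bmat_apply_of_ne _ _ (Fin.ne_of_val_ne (by omega)), cartanB_apply_of_val_eq_succ h]
  split_ifs <;> rfl

variable {σ} {x : Fin n → ℤ}

lemma abs_apply_eq_of_Bmat_cartanB_mulVec_eq_zero (hx : Bmat (cartanB n) σ *ᵥ x = 0)
    {i j l : Fin n} (hij : i.val + 1 = j.val) (hjl : j.val + 1 = l.val) :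
    |x i| = (if l.val = n - 1 then 2 else 1) * |x l| := by
  have hrow := (Bmat_cartanB_isHollowTridiagonal σ).mulVec_apply_of_consecutive x hij hjl
  rw [hx, Pi.zero_apply, eq_comm, add_eq_zero_iff_eq_neg] at hrow
  have := congrArg abs hrow
  rwa [abs_neg, abs_mul, abs_mul, abs_Bmat_cartanB_of_val_succ_eq σ hij, one_mul,
    abs_Bmat_cartanB_of_val_eq_succ σ hjl] at this

lemma apply_eq_zero_of_Bmat_cartanB_mulVec_eq_zero_of_odd (hx : Bmat (cartanB n) σ *ᵥ x = 0)
    (i : Fin n) (hi : Odd i.val) : x i = 0 := by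
  refine (Bmat_cartanB_isHollowTridiagonal σ).apply_eq_zero_of_odd (fun i j h => ?_) hx i hi
  rw [← abs_pos, abs_Bmat_cartanB_of_val_eq_succ σ h]
  split_ifs <;> norm_num

lemma abs_apply_eq_abs_apply_zero_of_even [NeZero n] (hx : Bmat (cartanB n) σ *ᵥ x = 0)
    (i : Fin n) (hi : Even i.val) (hlt : i.val + 1 < n) : |x i| = |x 0| := by
  obtain ⟨m, hm⟩ := hi
  induction m generalizing i with
  | zero => congr; ext; simp [hm]
  | succ m ih =>
    rw [← ih ⟨2 * m, by omega⟩ (by simp; omega) (by simp; omega),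
      abs_apply_eq_of_Bmat_cartanB_mulVec_eq_zero hx (i := ⟨2 * m, by omega⟩)
        (j := ⟨2 * m + 1, by omega⟩) (l := i) rfl (by simp; omega), if_neg (by omega), one_mul]

end TypeB

lemma eq_zero_of_Bmat_cartanB_mulVec_eq_zero {k : ℕ} (hk : 1 ≤ k)
    {σ : Equiv.Perm (Fin (2 * k + 1))} {x : Fin (2 * k + 1) → ℤ}
    (hx : Bmat (cartanB (2 * k + 1)) σ *ᵥ x = 0) (h0 : |x 0| ≤ 1) : x = 0 := by
  have hfirst : |x 0| = 2 * |x (Fin.last _)| := by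
    rw [← abs_apply_eq_abs_apply_zero_of_even hx ⟨2 * k - 2, by omega⟩ ⟨k - 1, by simp; omega⟩
      (by simp; omega), abs_apply_eq_of_Bmat_cartanB_mulVec_eq_zero hx
        (j := ⟨2 * k - 1, by omega⟩) (l := Fin.last _) (by simp; omega) (by simp; omega),
      if_pos (by simp)]
  have hlast : x (Fin.last _) = 0 :=
    abs_eq_zero.mp (by have := abs_nonneg (x (Fin.last _)); omega)
  funext i
  rcases Nat.even_or_odd i.val with he | ho
  · rcases eq_or_ne i (Fin.last _) with rfl | hne
    · exact hlast
    · have hlt := Fin.val_lt_last hne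
      rw [Pi.zero_apply, ← abs_eq_zero, abs_apply_eq_abs_apply_zero_of_even hx i he (by omega),
        hfirst, hlast, abs_zero, mul_zero]
  · exact apply_eq_zero_of_Bmat_cartanB_mulVec_eq_zero_of_odd hx i ho

lemma IsPosRootB.apply_zero_mem_Icc {n : ℕ} [NeZero n] {v : Fin n → ℤ} (hv : IsPosRootB n v) :
    v 0 ∈ Set.Icc 0 1 := by
  rcases hv with ⟨a, b, -, -, rfl⟩ | ⟨a, b, hab, -, rfl⟩
  · dsimp only
    split_ifs <;> simp
  · dsimp only
    rw [if_neg (by simp; omega)]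
    split_ifs <;> simp

/-- In type `Bₙ` with `n = 2k+1` odd, `n ≥ 5`, the acyclic exchange matrix `B_σ` is
injective on the set of positive roots. -/
theorem Bmat_injOn_posRoots_typeB (k : ℕ) (hk : 2 ≤ k)
    (σ : Equiv.Perm (Fin (2 * k + 1))) (α β : Fin (2 * k + 1) → ℤ)
    (hα : IsPosRootB (2 * k + 1) α) (hβ : IsPosRootB (2 * k + 1) β)
    (h : (Bmat (cartanB (2 * k + 1)) σ).mulVec α =
         (Bmat (cartanB (2 * k + 1)) σ).mulVec β) :
    α = β := by
  have hx : Bmat (cartanB (2 * k + 1)) σ *ᵥ (α - β) = 0 := by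
    rw [mulVec_sub, h, sub_self]
  have h0 : |(α - β) 0| ≤ 1 := by
    obtain ⟨hα₀, hα₁⟩ := hα.apply_zero_mem_Icc
    obtain ⟨hβ₀, hβ₁⟩ := hβ.apply_zero_mem_Icc
    rw [Pi.sub_apply, abs_le]
    constructor <;> linarith
  exact sub_eq_zero.mp (eq_zero_of_Bmat_cartanB_mulVec_eq_zero (by omega) hx h0)
end
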